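/- For any feasible eviction strategy Q (and any run of Q), the number of time steps t at which Q evicts an optimal page — that is, a page σ(j) with j ∈ I_Q(t−1) such that ν(j) ≥ ν(i) for all i ∈ I_Q(t−1) — is at most OPT. -/

import Mathlib

/-!
Optimal evictions of `R` are charged to the misses of a second run `A` through a potential.
At time `τ` and threshold `x`, count the pages cached by `A` but not by `R` whose next request
comes by time `x`, minus the pages cached by `R` but not by `A` whose next request comes before
`x`; the potential is the largest value of this surplus. A request raises the potential by at
most one when `A` misses, and an optimal eviction by `R` lowers it by one more. The delicate
case is when the page `q` evicted by `R` is itself counted at threshold `x`: every other page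
cached only by `R` is then requested before `q`, and since `R` keeps a full cache the surplus
at `x` after the step is not positive.
-/

namespace Caching

attribute [local instance low] Classical.propDecidable

/-- A run of a feasible eviction strategy on the request sequence `σ` with cache size `k`
and time horizon `T`.  `C t` is the cache after processing request `t` (with `C 0 = ∅`),
and `p t` is the page evicted at time `t` (meaningful at full-cache misses). -/
structure CacheRun (S : Type) [DecidableEq S] (k T : ℕ) (σ : ℕ → S) where
  C : ℕ → Finset S
  p : ℕ → S
  init : C 0 = ∅
  card_le : ∀ t, (C t).card ≤ k
  hit : ∀ t, 1 ≤ t → t ≤ T → (σ t ∈ C (t - 1) ∨ (C (t - 1)).card < k) →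
      C t = insert (σ t) (C (t - 1))
  evict_mem : ∀ t, 1 ≤ t → t ≤ T → σ t ∉ C (t - 1) → (C (t - 1)).card = k →
      p t ∈ C (t - 1)
  evict : ∀ t, 1 ≤ t → t ≤ T → σ t ∉ C (t - 1) → (C (t - 1)).card = k →
      C t = insert (σ t) ((C (t - 1)).erase (p t))

variable {S : Type} [DecidableEq S]

/- `nextReq σ T t` is `ν(t)`: the first time `s > t` (with `s ≤ T`) at which the page
`σ t` is requested again, and `T + 1` if there is no such time. -/
open Classical in
noncomputable def nextReq (σ : ℕ → S) (T t : ℕ) : ℕ :=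
  if h : ∃ s, t < s ∧ s ≤ T ∧ σ s = σ t then Nat.find h else T + 1

/-- The total prediction loss `η = Σ_{t=1}^T |ν(t) - ω(t)|`. -/
noncomputable def totalLoss (σ : ℕ → S) (T : ℕ) (ω : ℕ → ℕ) : ℕ :=
  ∑ t ∈ Finset.Icc 1 T, Nat.dist (nextReq σ T t) (ω t)

/-- `I_Q(t)`: indices of the last requests (up to time `t`) of the currently cached pages. -/
noncomputable def lastIdx {k T : ℕ} {σ : ℕ → S} (R : CacheRun S k T σ) (t : ℕ) : Finset ℕ :=
  (Finset.Icc 1 t).filter fun i => σ i ∈ R.C t ∧ ∀ j ∈ Finset.Icc (i + 1) t, σ j ≠ σ i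

/-- Time `t` is a full-cache miss (an eviction step). -/
def EvictStep {k T : ℕ} {σ : ℕ → S} (R : CacheRun S k T σ) (t : ℕ) : Prop :=
  1 ≤ t ∧ t ≤ T ∧ σ t ∉ R.C (t - 1) ∧ (R.C (t - 1)).card = k

/-- At time `t` the run evicts the page whose last-request index is `i`. -/
def EvictsIdx {k T : ℕ} {σ : ℕ → S} (R : CacheRun S k T σ) (t i : ℕ) : Prop :=
  EvictStep R t ∧ i ∈ lastIdx R (t - 1) ∧ R.p t = σ i

/-- `OBJ_Q`: the number of cache misses of the run. -/
noncomputable def misses {k T : ℕ} {σ : ℕ → S} (R : CacheRun S k T σ) : ℕ :=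
  ((Finset.Icc 1 T).filter fun t => σ t ∉ R.C (t - 1)).card

/-- Belady's algorithm: on a full-cache miss always evict the cached page with the
largest next-request time. -/
def IsBelady {k T : ℕ} {σ : ℕ → S} (A : CacheRun S k T σ) : Prop :=
  ∀ t, EvictStep A t → ∀ i ∈ lastIdx A (t - 1), A.p t = σ i →
    ∀ j ∈ lastIdx A (t - 1), nextReq σ T j ≤ nextReq σ T i

/-- BlindOracle: on a full-cache miss always evict the cached page with the largest
predicted next-request time. -/
def IsBlindOracle {k T : ℕ} {σ : ℕ → S} (B : CacheRun S k T σ) (ω : ℕ → ℕ) : Prop :=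
  ∀ t, EvictStep B t → ∀ i ∈ lastIdx B (t - 1), B.p t = σ i →
    ∀ j ∈ lastIdx B (t - 1), ω j ≤ ω i

/-- An eviction graph of a run: a directed graph on `{1,…,T}` whose every edge `(i, j)`
corresponds to a distinct time (`time e`) at which the run made a mistake by evicting
page `σ j` while `i` was a strictly better eviction candidate in the cache. -/
structure EvictionGraph {k T : ℕ} {σ : ℕ → S} (R : CacheRun S k T σ) where
  E : Finset (ℕ × ℕ)
  time : ℕ × ℕ → ℕ
  time_inj : ∀ e ∈ E, ∀ e' ∈ E, time e = time e' → e = e'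
  mistake : ∀ e ∈ E, EvictsIdx R (time e) e.2 ∧ e.1 ∈ lastIdx R (time e - 1) ∧
      nextReq σ T e.2 < nextReq σ T e.1

/-- The eviction at time `t` triggers the eviction at time `t'`: the page evicted
at `t` is next requested at `t' = ν(i)`, which is again an eviction step. -/
def Triggers {k T : ℕ} {σ : ℕ → S} (R : CacheRun S k T σ) (t t' : ℕ) : Prop :=
  ∃ i, EvictsIdx R t i ∧ t' = nextReq σ T i ∧ ∃ j, EvictsIdx R t' j

/-- The eviction of the page with last-request index `i` triggers the eviction of the
page with last-request index `j` (at time `ν(i)`). -/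
def TriggersIdx {k T : ℕ} {σ : ℕ → S} (R : CacheRun S k T σ) (i j : ℕ) : Prop :=
  (∃ t, EvictsIdx R t i) ∧ EvictsIdx R (nextReq σ T i) j

/-- The page requested at time `t` was never requested before. -/
def NewPage (σ : ℕ → S) (t : ℕ) : Prop := ∀ s, 1 ≤ s → s < t → σ s ≠ σ t

/-- At time `t` the evicted page has the largest prediction among cached pages. -/
def BlindChoiceAt {k T : ℕ} {σ : ℕ → S} (R : CacheRun S k T σ) (ω : ℕ → ℕ) (t : ℕ) : Prop :=
  ∀ i ∈ lastIdx R (t - 1), R.p t = σ i → ∀ j ∈ lastIdx R (t - 1), ω j ≤ ω i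

/-- Corrector's choice at time `t`: if some cached page has a provably wrong prediction
(`ω i < t`), evict such a page with minimal prediction; otherwise act as BlindOracle. -/
def CorrectorChoiceAt {k T : ℕ} {σ : ℕ → S} (R : CacheRun S k T σ) (ω : ℕ → ℕ) (t : ℕ) :
    Prop :=
  ((∃ i ∈ lastIdx R (t - 1), ω i < t) →
    ∀ i ∈ lastIdx R (t - 1), R.p t = σ i →
      ω i < t ∧ ∀ j ∈ lastIdx R (t - 1), ω j < t → ω i ≤ ω j) ∧
  ((¬ ∃ i ∈ lastIdx R (t - 1), ω i < t) → BlindChoiceAt R ω t)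

/-- The page requested at time `t` was last evicted (before `t`) at a step labeled with
strategy `s₀` (0 = BlindOracle, 1 = RandomAlg, 2 = Corrector). -/
def LastEvictedWith {k T : ℕ} {σ : ℕ → S} (R : CacheRun S k T σ) (strat : ℕ → Fin 3)
    (t : ℕ) (s₀ : Fin 3) : Prop :=
  ∃ t₀, t₀ < t ∧ EvictStep R t₀ ∧ R.p t₀ = σ t ∧ strat t₀ = s₀ ∧
    ∀ t₁, t₀ < t₁ → t₁ < t → ¬(EvictStep R t₁ ∧ R.p t₁ = σ t)

/-- A run of the AlternatingOracle strategy (for a fixed realization of its random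
choices), together with the labeling `strat` of which of the three strategies was used
at each eviction step: on a miss for a never-requested page use BlindOracle; if the
requested page was last evicted by BlindOracle use RandomAlg (an arbitrary cached page);
if by RandomAlg use Corrector; if by Corrector use BlindOracle. -/
def IsAlternatingOracle {k T : ℕ} {σ : ℕ → S} (R : CacheRun S k T σ) (ω : ℕ → ℕ)
    (strat : ℕ → Fin 3) : Prop :=
  ∀ t, EvictStep R t →
    (NewPage σ t → strat t = 0 ∧ BlindChoiceAt R ω t) ∧
    (LastEvictedWith R strat t 0 → strat t = 1) ∧
    (LastEvictedWith R strat t 1 → strat t = 2 ∧ CorrectorChoiceAt R ω t) ∧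
    (LastEvictedWith R strat t 2 → strat t = 0 ∧ BlindChoiceAt R ω t)

/-- AlternatingOracle driven by a seed `u` of uniform random values: at each eviction
step performed by RandomAlg at time `t`, the evicted page is the one whose last-request
index has rank `u t` among the `k` cached indices, so that for a uniformly random seed
the evicted page is uniform over the cache. -/
def IsAlternatingOracleSeeded {k T : ℕ} {σ : ℕ → S} (R : CacheRun S k T σ) (ω : ℕ → ℕ)
    (strat : ℕ → Fin 3) (u : Fin (T + 1) → Fin k) : Prop :=
  IsAlternatingOracle R ω strat ∧
  ∀ t (h : EvictStep R t), strat t = 1 →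
    ∀ i ∈ lastIdx R (t - 1), R.p t = σ i →
      ((lastIdx R (t - 1)).filter fun j => j < i).card =
        ((u ⟨t, Nat.lt_succ_of_le h.2.1⟩ : Fin k) : ℕ)

/-- The family of runs is adapted to the seeds: the behavior up to time `t` depends only
on the seed values with index at most `t` (the strategy is online). -/
def Adapted {k T : ℕ} {σ : ℕ → S} (R : (Fin (T + 1) → Fin k) → CacheRun S k T σ)
    (strat : (Fin (T + 1) → Fin k) → ℕ → Fin 3) : Prop :=
  ∀ u u' t, (∀ s : Fin (T + 1), (s : ℕ) ≤ t → u s = u' s) →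
    (R u).C t = (R u').C t ∧ (R u).p t = (R u').p t ∧ strat u t = strat u' t

/-- The probability of the outcome `x` for `T` i.i.d. Bernoulli(γ) random bits. -/
noncomputable def bernWeight (γ : ℝ) {T : ℕ} (x : Fin T → Bool) : ℝ :=
  ∏ i, if x i then γ else 1 - γ

/-- `S(x, m)`: the number of ones among the first `m` coordinates of `x`. -/
noncomputable def scount {T : ℕ} (x : Fin T → Bool) (m : ℕ) : ℕ :=
  (Finset.univ.filter fun i : Fin T => (i : ℕ) < m ∧ x i).card

theorem sum_Icc_le_sum_Icc_of_potential {e f Φ : ℕ → ℕ} {N : ℕ} (h0 : Φ 0 = 0)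
    (hstep : ∀ τ, τ + 1 ≤ N → e (τ + 1) + Φ (τ + 1) ≤ f (τ + 1) + Φ τ) :
    ∑ t ∈ Finset.Icc 1 N, e t ≤ ∑ t ∈ Finset.Icc 1 N, f t := by
  suffices ∀ m ≤ N, ∑ t ∈ Finset.Icc 1 m, e t + Φ m ≤ ∑ t ∈ Finset.Icc 1 m, f t by
    exact (Nat.le_add_right _ _).trans (this N le_rfl)
  intro m hm
  induction m with
  | zero => simp [h0]
  | succ m ih =>
    rw [Finset.sum_Icc_succ_top (by omega), Finset.sum_Icc_succ_top (by omega)]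
    have := hstep m hm
    have := ih (by omega)
    omega

section NextRequest

variable {S : Type} [DecidableEq S]

noncomputable def nextReqFrom (σ : ℕ → S) (T : ℕ) (q : S) (t : ℕ) : ℕ :=
  if h : ∃ s, t ≤ s ∧ s ≤ T ∧ σ s = q then Nat.find h else T + 1

variable {σ : ℕ → S} {T : ℕ} {q q' : S} {s t : ℕ}

theorem nextReqFrom_le_succ : nextReqFrom σ T q t ≤ T + 1 := by
  unfold nextReqFrom
  split_ifs with h
  · exact (Nat.find_spec h).2.1.trans T.le_succ
  · rfl

theorem nextReqFrom_spec (h : nextReqFrom σ T q t ≤ T) :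
    t ≤ nextReqFrom σ T q t ∧ σ (nextReqFrom σ T q t) = q := by
  unfold nextReqFrom at h ⊢
  split_ifs at h ⊢ with hex
  · exact ⟨(Nat.find_spec hex).1, (Nat.find_spec hex).2.2⟩
  · omega

theorem le_nextReqFrom (ht : t ≤ T + 1) : t ≤ nextReqFrom σ T q t := by
  by_cases hT : nextReqFrom σ T q t ≤ T
  · exact (nextReqFrom_spec hT).1
  · omega

theorem nextReqFrom_le_of_eq (hts : t ≤ s) (hs : s ≤ T) (hq : σ s = q) :
    nextReqFrom σ T q t ≤ s := by
  unfold nextReqFrom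
  split_ifs with h
  · exact Nat.find_min' h ⟨hts, hs, hq⟩
  · exact absurd ⟨s, hts, hs, hq⟩ h

theorem nextReqFrom_self (ht : t ≤ T) : nextReqFrom σ T (σ t) t = t :=
  (nextReqFrom_le_of_eq le_rfl ht rfl).antisymm (le_nextReqFrom (by omega))

theorem nextReqFrom_succ (h : σ t ≠ q) : nextReqFrom σ T q (t + 1) = nextReqFrom σ T q t := by
  apply le_antisymm
  · by_cases hT : nextReqFrom σ T q t ≤ T
    · obtain ⟨hle, hspec⟩ := nextReqFrom_spec hT
      have hne : nextReqFrom σ T q t ≠ t := fun he => h (he ▸ hspec)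
      exact nextReqFrom_le_of_eq (by omega) hT hspec
    · exact nextReqFrom_le_succ.trans (by omega)
  · by_cases hT : nextReqFrom σ T q (t + 1) ≤ T
    · obtain ⟨hle, hspec⟩ := nextReqFrom_spec hT
      exact nextReqFrom_le_of_eq (by omega) hT hspec
    · exact nextReqFrom_le_succ.trans (by omega)

theorem nextReqFrom_eq_of_forall_ne {t' : ℕ} (htt' : t ≤ t')
    (h : ∀ s, t ≤ s → s < t' → σ s ≠ q) :
    nextReqFrom σ T q t' = nextReqFrom σ T q t := by
  induction t', htt' using Nat.le_induction with
  | base => rfl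
  | succ t' htt' ih =>
    rw [nextReqFrom_succ (h t' htt' t'.lt_succ_self),
      ih fun s hs hst => h s hs (hst.trans t'.lt_succ_self)]

theorem eq_of_nextReqFrom_eq (hT : nextReqFrom σ T q t ≤ T)
    (he : nextReqFrom σ T q t = nextReqFrom σ T q' t) : q = q' :=
  calc q = σ (nextReqFrom σ T q t) := (nextReqFrom_spec hT).2.symm
    _ = q' := he ▸ (nextReqFrom_spec (he ▸ hT)).2

theorem nextReq_eq_nextReqFrom (σ : ℕ → S) (T t : ℕ) :
    nextReq σ T t = nextReqFrom σ T (σ t) (t + 1) :=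
  rfl

end NextRequest

section Surplus

open Finset

variable {S : Type} [DecidableEq S] (n : S → ℕ)

noncomputable def surplus (a b : Finset S) (x : ℕ) : ℤ :=
  #{p ∈ a \ b | n p ≤ x} - #{p ∈ b \ a | n p < x}

variable {n} {a b a' : Finset S} {r q : S} {x : ℕ}

theorem surplus_congr {n' : S → ℕ} (hra : r ∈ a) (hrb : r ∈ b)
    (h : ∀ p ≠ r, n p = n' p) :
    surplus n a b x = surplus n' a b x := by
  have key : ∀ c d : Finset S, r ∈ d → ∀ P : ℕ → Prop, [DecidablePred P] →
      {p ∈ c \ d | P (n p)} = {p ∈ c \ d | P (n' p)} := by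
    intro c d hrd P _
    refine filter_congr fun p hp => ?_
    rw [h p (ne_of_mem_of_not_mem hrd (mem_sdiff.1 hp).2).symm]
  rw [surplus, surplus, key a b hrb (· ≤ x), key b a hra (· < x)]

theorem surplus_nonpos_of_lt (h : ∀ p ∈ a \ b, x < n p) : surplus n a b x ≤ 0 := by
  have : {p ∈ a \ b | n p ≤ x} = ∅ :=
    filter_eq_empty_iff.2 fun p hp => by have := h p hp; omega
  simp [surplus, this]

theorem one_le_surplus (hr : r ∈ a \ b) (hrx : n r ≤ x) (h : ∀ p ∈ b \ a, x ≤ n p) :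
    1 ≤ surplus n a b x := by
  have hW : {p ∈ b \ a | n p < x} = ∅ :=
    filter_eq_empty_iff.2 fun p hp => by have := h p hp; omega
  have hL : 0 < #{p ∈ a \ b | n p ≤ x} := card_pos.2 ⟨r, mem_filter.2 ⟨hr, hrx⟩⟩
  simp only [surplus, hW, card_empty]
  omega

theorem surplus_nonpos_of_card_le (hcard : #a ≤ #b) (h : ∀ p ∈ b \ a, n p < x) :
    surplus n a b x ≤ 0 := by
  have hW : {p ∈ b \ a | n p < x} = b \ a := filter_true_of_mem h
  have hL : #{p ∈ a \ b | n p ≤ x} ≤ #(a \ b) := card_filter_le _ _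
  have hsdiff : #(a \ b) ≤ #(b \ a) := card_sdiff_le_card_sdiff_iff.2 hcard
  rw [surplus, hW]
  omega

theorem surplus_insert_le (ha' : a' ⊆ insert r a) :
    surplus n a' (insert r b) x ≤ surplus n a b x + if r ∈ a then 0 else 1 := by
  unfold surplus
  set W := {p ∈ b \ a | n p < x}
  have ha'r : ∀ p ∈ a', p = r ∨ p ∈ a := fun p hp => mem_insert.1 (ha' hp)
  have hL : {p ∈ a' \ insert r b | n p ≤ x} ⊆ {p ∈ a \ b | n p ≤ x} := fun p hp => by
    simp only [mem_filter, mem_sdiff, mem_insert] at hp ⊢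
    grind
  have hW : W.erase r ⊆ {p ∈ insert r b \ a' | n p < x} := fun p hp => by
    simp only [W, mem_erase, mem_filter, mem_sdiff, mem_insert] at hp ⊢
    grind
  have hL' := card_le_card hL
  have hW' := card_le_card hW
  split_ifs with hra
  · have hrW : r ∉ W := fun hr => (mem_sdiff.1 (mem_filter.1 hr).1).2 hra
    rw [erase_eq_of_notMem hrW] at hW'
    omega
  · have := pred_card_le_card_erase (s := W) (a := r)
    omega

theorem surplus_insert_erase_le (ha' : a' ⊆ insert r a) (hrb : r ∉ b) :
    surplus n a' (insert r (b.erase q)) x + (if r ∈ a ∧ n r ≤ x then 1 else 0) ≤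
      surplus n a b x + if (q ∈ a' ∧ n q ≤ x) ∨ (q ∉ a ∧ n q < x) then 1 else 0 := by
  set L' := {p ∈ a' \ insert r (b.erase q) | n p ≤ x}
  set L := {p ∈ a \ b | n p ≤ x}
  set W := {p ∈ b \ a | n p < x}
  set W' := {p ∈ insert r (b.erase q) \ a' | n p < x}
  have ha'r : ∀ p ∈ a', p = r ∨ p ∈ a := fun p hp => mem_insert.1 (ha' hp)
  have hL : L'.erase q ⊆ L.erase r := fun p hp => by
    simp only [L, L', mem_erase, mem_filter, mem_sdiff, mem_insert] at hp ⊢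
    grind
  have hW : W.erase q ⊆ W' := fun p hp => by
    simp only [W, W', mem_erase, mem_filter, mem_sdiff, mem_insert] at hp ⊢
    grind
  have hrL : (#(L.erase r) : ℤ) + (if r ∈ a ∧ n r ≤ x then 1 else 0) = #L := by
    by_cases hr : r ∈ a ∧ n r ≤ x
    · rw [if_pos hr, ← card_erase_add_one (mem_filter.2 ⟨mem_sdiff.2 ⟨hr.1, hrb⟩, hr.2⟩)]
      push_cast
      rfl
    · rw [if_neg hr, add_zero, erase_eq_of_notMem fun h => hr ?_]
      simp only [L, mem_filter, mem_sdiff] at h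
      exact ⟨h.1.1, h.2⟩
  have hL' := card_le_card hL
  have hW' := card_le_card hW
  show (#L' : ℤ) - #W' + _ ≤ (#L : ℤ) - #W + _
  -- `q` lies in at most one of `L'` and `W`: the first needs `q ∈ a'`, the second `q ∉ a`.
  by_cases hqW : q ∈ W
  · simp only [W, mem_filter, mem_sdiff] at hqW
    have hqL' : q ∉ L' := fun h => by
      simp only [L', mem_filter, mem_sdiff] at h
      grind
    rw [erase_eq_of_notMem hqL'] at hL'
    have := pred_card_le_card_erase (s := W) (a := q)
    rw [if_pos (Or.inr ⟨hqW.1.2, hqW.2⟩)]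
    omega
  · rw [erase_eq_of_notMem hqW] at hW'
    by_cases hqL' : q ∈ L'
    · have := pred_card_le_card_erase (s := L') (a := q)
      simp only [L', mem_filter, mem_sdiff] at hqL'
      rw [if_pos (Or.inl ⟨hqL'.1.1, hqL'.2⟩)]
      omega
    · rw [erase_eq_of_notMem hqL'] at hL'
      split_ifs at hrL ⊢ <;> omega

end Surplus

namespace CacheRun

variable {S : Type} [DecidableEq S] {k T : ℕ} {σ : ℕ → S} (X : CacheRun S k T σ) {τ : ℕ}

theorem C_succ_eq_insert (hτ : τ + 1 ≤ T) (h : σ (τ + 1) ∈ X.C τ ∨ (X.C τ).card < k) :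
    X.C (τ + 1) = insert (σ (τ + 1)) (X.C τ) :=
  X.hit (τ + 1) τ.succ_pos hτ h

theorem C_succ_eq_insert_erase (hτ : τ + 1 ≤ T) (hmiss : σ (τ + 1) ∉ X.C τ)
    (hfull : (X.C τ).card = k) :
    X.C (τ + 1) = insert (σ (τ + 1)) ((X.C τ).erase (X.p (τ + 1))) :=
  X.evict (τ + 1) τ.succ_pos hτ hmiss hfull

theorem p_succ_mem (hτ : τ + 1 ≤ T) (hmiss : σ (τ + 1) ∉ X.C τ)
    (hfull : (X.C τ).card = k) :
    X.p (τ + 1) ∈ X.C τ :=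
  X.evict_mem (τ + 1) τ.succ_pos hτ hmiss hfull

theorem C_succ_subset (hτ : τ + 1 ≤ T) : X.C (τ + 1) ⊆ insert (σ (τ + 1)) (X.C τ) := by
  by_cases h : σ (τ + 1) ∈ X.C τ ∨ (X.C τ).card < k
  · exact (X.C_succ_eq_insert hτ h).subset
  · rw [not_or, not_lt] at h
    rw [X.C_succ_eq_insert_erase hτ h.1 (h.2.antisymm' (X.card_le τ))]
    exact Finset.insert_subset_insert _ (Finset.erase_subset _ _)

theorem mem_C_succ (hτ : τ + 1 ≤ T) : σ (τ + 1) ∈ X.C (τ + 1) := by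
  by_cases h : σ (τ + 1) ∈ X.C τ ∨ (X.C τ).card < k
  · exact X.C_succ_eq_insert hτ h ▸ Finset.mem_insert_self _ _
  · rw [not_or, not_lt] at h
    exact X.C_succ_eq_insert_erase hτ h.1 (h.2.antisymm' (X.card_le τ)) ▸
      Finset.mem_insert_self _ _

theorem exists_request_of_mem (hτ : τ ≤ T) {q : S} (hq : q ∈ X.C τ) :
    ∃ i ∈ Finset.Icc 1 τ, σ i = q := by
  induction τ with
  | zero => simp [X.init] at hq
  | succ τ ih =>
    rcases Finset.mem_insert.1 (X.C_succ_subset hτ hq) with h | h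
    · exact ⟨τ + 1, Finset.mem_Icc.2 ⟨τ.succ_pos, le_rfl⟩, h.symm⟩
    · obtain ⟨i, hi, hσi⟩ := ih (by omega) h
      exact ⟨i, Finset.Icc_subset_Icc_right τ.le_succ hi, hσi⟩

theorem exists_mem_lastIdx (hτ : τ ≤ T) {q : S} (hq : q ∈ X.C τ) :
    ∃ i ∈ lastIdx X τ, σ i = q := by
  obtain ⟨i₀, hi₀, hσi₀⟩ := X.exists_request_of_mem hτ hq
  have hne : ((Finset.Icc 1 τ).filter (σ · = q)).Nonempty :=
    ⟨i₀, Finset.mem_filter.2 ⟨hi₀, hσi₀⟩⟩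
  set i := ((Finset.Icc 1 τ).filter (σ · = q)).max' hne
  obtain ⟨hi, hσi⟩ := Finset.mem_filter.1 (Finset.max'_mem _ hne)
  refine ⟨i, ?_, hσi⟩
  simp only [lastIdx, Finset.mem_filter]
  refine ⟨hi, hσi ▸ hq, fun j hj hσj => ?_⟩
  have hj' := Finset.mem_Icc.1 hj
  have hi' := Finset.mem_Icc.1 hi
  have : j ≤ i := Finset.le_max' _ j (Finset.mem_filter.2
    ⟨Finset.mem_Icc.2 ⟨by omega, hj'.2⟩, hσj.trans hσi⟩)
  omega

theorem nextReq_eq_nextReqFrom_of_mem_lastIdx {i : ℕ} (hi : i ∈ lastIdx X τ) :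
    nextReq σ T i = nextReqFrom σ T (σ i) (τ + 1) := by
  simp only [lastIdx, Finset.mem_filter, Finset.mem_Icc] at hi
  obtain ⟨hiτ, -, hlast⟩ := hi
  rw [nextReq_eq_nextReqFrom]
  exact (nextReqFrom_eq_of_forall_ne (by omega) fun s hs hsτ => hlast s ⟨hs, by omega⟩).symm

end CacheRun

section Potential

open Finset

variable {S : Type} [DecidableEq S] {k T : ℕ} {σ : ℕ → S}

def EvictsOptimal (R : CacheRun S k T σ) (t : ℕ) : Prop :=
  ∃ j, EvictsIdx R t j ∧ ∀ i ∈ lastIdx R (t - 1), nextReq σ T i ≤ nextReq σ T j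

theorem EvictsOptimal.evictStep {R : CacheRun S k T σ} {t : ℕ} (h : EvictsOptimal R t) :
    EvictStep R t :=
  h.choose_spec.1.1

theorem EvictsOptimal.nextReqFrom_le {R : CacheRun S k T σ} {τ : ℕ}
    (h : EvictsOptimal R (τ + 1)) {q : S} (hq : q ∈ R.C τ) :
    nextReqFrom σ T q (τ + 1) ≤ nextReqFrom σ T (R.p (τ + 1)) (τ + 1) := by
  obtain ⟨j, ⟨⟨-, hτ, -⟩, hj, hpj⟩, hopt⟩ := h
  simp only [Nat.add_sub_cancel] at hj hopt
  obtain ⟨i, hi, rfl⟩ := R.exists_mem_lastIdx (by omega) hq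
  rw [hpj, ← R.nextReq_eq_nextReqFrom_of_mem_lastIdx hi,
    ← R.nextReq_eq_nextReqFrom_of_mem_lastIdx hj]
  exact hopt i hi

noncomputable def cacheSurplus (R A : CacheRun S k T σ) (τ x : ℕ) : ℤ :=
  surplus (nextReqFrom σ T · (τ + 1)) (A.C τ) (R.C τ) x

noncomputable def potential (R A : CacheRun S k T σ) (τ : ℕ) : ℕ :=
  (range (T + 1)).sup fun x => (cacheSurplus R A τ x).toNat

variable (R A : CacheRun S k T σ) {τ x : ℕ}

theorem cacheSurplus_le_potential (hx : x ≤ T) : cacheSurplus R A τ x ≤ potential R A τ :=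
  (Int.self_le_toNat _).trans <| Int.ofNat_le.2 <|
    le_sup (f := fun x => (cacheSurplus R A τ x).toNat) (mem_range.2 (by omega))

theorem potential_le {c : ℤ} (h : ∀ x ≤ T, cacheSurplus R A τ x ≤ c) :
    potential R A τ ≤ c.toNat :=
  Finset.sup_le fun x hx => Int.toNat_le_toNat (h x (Nat.lt_succ_iff.1 (mem_range.1 hx)))

theorem potential_zero : potential R A 0 = 0 := by
  simpa using potential_le R A (c := 0) fun x _ => surplus_nonpos_of_lt (by simp [A.init])

theorem one_le_potential (hτ : τ + 1 ≤ T) (hA : σ (τ + 1) ∈ A.C τ)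
    (hR : σ (τ + 1) ∉ R.C τ) :
    1 ≤ potential R A τ := by
  have hone : 1 ≤ cacheSurplus R A τ (τ + 1) :=
    one_le_surplus (mem_sdiff.2 ⟨hA, hR⟩) (nextReqFrom_self hτ).le
      fun p _ => le_nextReqFrom (by omega)
  have := cacheSurplus_le_potential R A (τ := τ) hτ
  omega

theorem cacheSurplus_succ (hτ : τ + 1 ≤ T) :
    cacheSurplus R A (τ + 1) x =
      surplus (nextReqFrom σ T · (τ + 1)) (A.C (τ + 1)) (R.C (τ + 1)) x :=
  surplus_congr (A.mem_C_succ hτ) (R.mem_C_succ hτ) fun _ hp => nextReqFrom_succ (Ne.symm hp)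

theorem cacheSurplus_succ_nonpos (hτ : τ + 1 ≤ T) (hx : x ≤ τ + 1) :
    cacheSurplus R A (τ + 1) x ≤ 0 :=
  surplus_nonpos_of_lt fun _ _ =>
    (show x < τ + 1 + 1 by omega).trans_le (le_nextReqFrom (by omega))

theorem cacheSurplus_succ_nonpos_of_evictsOptimal (hE : EvictsOptimal R (τ + 1)) (hxT : x ≤ T)
    (hqx : nextReqFrom σ T (R.p (τ + 1)) (τ + 1) ≤ x) : cacheSurplus R A (τ + 1) x ≤ 0 := by
  obtain ⟨-, hτ, hmiss, hfull⟩ := hE.evictStep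
  simp only [Nat.add_sub_cancel] at hmiss hfull
  rw [cacheSurplus_succ R A hτ, R.C_succ_eq_insert_erase hτ hmiss hfull]
  apply surplus_nonpos_of_card_le
  · rw [card_insert_of_notMem fun h => hmiss (mem_of_mem_erase h),
      card_erase_of_mem (R.p_succ_mem hτ hmiss hfull)]
    have := A.card_le (τ + 1)
    omega
  · intro p hp
    simp only [mem_sdiff, mem_insert, mem_erase] at hp
    obtain ⟨hpr | ⟨hpq, hpR⟩, hpA⟩ := hp
    · exact absurd (hpr ▸ A.mem_C_succ hτ) hpA
    have hne : nextReqFrom σ T p (τ + 1) ≠ nextReqFrom σ T (R.p (τ + 1)) (τ + 1) :=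
      fun h => hpq (eq_of_nextReqFrom_eq (h ▸ hqx.trans hxT) h)
    have := hE.nextReqFrom_le hpR
    omega

theorem cacheSurplus_succ_le (hτ : τ + 1 ≤ T) (hx : τ + 1 ≤ x) (hxT : x ≤ T) :
    cacheSurplus R A (τ + 1) x + ((if EvictsOptimal R (τ + 1) then 1 else 0 : ℕ) : ℤ) ≤
        ((if σ (τ + 1) ∉ A.C τ then 1 else 0 : ℕ) : ℤ) + cacheSurplus R A τ x ∨
      cacheSurplus R A (τ + 1) x ≤ 0 := by
  have hA' := A.C_succ_subset hτ
  by_cases hR : σ (τ + 1) ∈ R.C τ ∨ (R.C τ).card < k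
  · have hE : ¬ EvictsOptimal R (τ + 1) := fun h => by
      obtain ⟨-, -, hmiss, hfull⟩ := h.evictStep
      simp only [Nat.add_sub_cancel] at hmiss hfull
      exact hR.elim hmiss fun h => h.ne hfull
    left
    rw [cacheSurplus_succ R A hτ, R.C_succ_eq_insert hτ hR, if_neg hE]
    have := surplus_insert_le (n := (nextReqFrom σ T · (τ + 1))) (b := R.C τ) (x := x) hA'
    unfold cacheSurplus
    split_ifs at this ⊢ <;> omega
  rw [not_or, not_lt] at hR
  by_cases hB : EvictsOptimal R (τ + 1) ∧
      ((R.p (τ + 1) ∈ A.C (τ + 1) ∧ nextReqFrom σ T (R.p (τ + 1)) (τ + 1) ≤ x) ∨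
        (R.p (τ + 1) ∉ A.C τ ∧ nextReqFrom σ T (R.p (τ + 1)) (τ + 1) < x))
  · exact .inr <|
      cacheSurplus_succ_nonpos_of_evictsOptimal R A hB.1 hxT (hB.2.elim (·.2) (·.2.le))
  left
  rw [cacheSurplus_succ R A hτ, R.C_succ_eq_insert_erase hτ hR.1 (hR.2.antisymm' (R.card_le τ))]
  have hstep := surplus_insert_erase_le (n := (nextReqFrom σ T · (τ + 1)))
    (q := R.p (τ + 1)) (x := x) hA' hR.1
  simp only [nextReqFrom_self hτ, hx, and_true] at hstep
  unfold cacheSurplus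
  by_cases hE : EvictsOptimal R (τ + 1)
  · rw [if_neg fun h => hB ⟨hE, h⟩] at hstep
    split_ifs at hstep ⊢ <;> omega
  · rw [if_neg hE]
    split_ifs at hstep ⊢ <;> omega

theorem potential_succ (hτ : τ + 1 ≤ T) :
    (if EvictsOptimal R (τ + 1) then 1 else 0) + potential R A (τ + 1) ≤
      (if σ (τ + 1) ∉ A.C τ then 1 else 0) + potential R A τ := by
  set e := if EvictsOptimal R (τ + 1) then 1 else 0
  set f := if σ (τ + 1) ∉ A.C τ then 1 else 0
  have he : e ≤ f + potential R A τ := by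
    by_cases hE : EvictsOptimal R (τ + 1)
    · by_cases hA : σ (τ + 1) ∈ A.C τ
      · have hmiss := hE.evictStep.2.2.1
        simp only [Nat.add_sub_cancel] at hmiss
        have := one_le_potential R A hτ hA hmiss
        simp only [e, f, hE, hA, if_true, not_true, if_false]
        omega
      · simp only [e, f, hE, hA, if_true, not_false_eq_true]
        omega
    · simp only [e, hE, if_false]
      omega
  have := potential_le R A (τ := τ + 1) (c := f + potential R A τ - e) fun x hx => by
    have := cacheSurplus_le_potential R A (τ := τ) hx
    rcases le_or_gt x (τ + 1) with hx' | hx'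
    · have := cacheSurplus_succ_nonpos R A hτ hx'
      omega
    · rcases cacheSurplus_succ_le R A hτ hx'.le hx with h | h <;> omega
  omega

end Potential

theorem stmt18_general {S : Type} [DecidableEq S] (k T : ℕ) (σ : ℕ → S)
    (R A : CacheRun S k T σ) :
    {t : ℕ | ∃ j, EvictsIdx R t j ∧
        ∀ i ∈ lastIdx R (t - 1), nextReq σ T i ≤ nextReq σ T j}.ncard ≤ misses A := by
  have hset : {t : ℕ | EvictsOptimal R t} = ↑((Finset.Icc 1 T).filter (EvictsOptimal R)) := by
    ext t
    simp only [Set.mem_ofPred_eq, Finset.coe_filter, Finset.mem_Icc]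
    exact ⟨fun h => ⟨⟨h.evictStep.1, h.evictStep.2.1⟩, h⟩, (·.2)⟩
  change {t : ℕ | EvictsOptimal R t}.ncard ≤ _
  rw [hset, Set.ncard_coe_finset, misses, Finset.card_filter, Finset.card_filter]
  exact sum_Icc_le_sum_Icc_of_potential (potential_zero R A) fun τ hτ => by
    simpa using potential_succ R A hτ

/-- For any run of a feasible eviction strategy, the number of time
steps at which it evicts an optimal page (one maximizing `ν` over the cache) is at most
`OPT`. -/
theorem stmt18 {S : Type} [DecidableEq S] (k T : ℕ) (hk : 1 ≤ k) (σ : ℕ → S)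
    (R A : CacheRun S k T σ) (hA : IsBelady A) :
    {t : ℕ | ∃ j, EvictsIdx R t j ∧
        ∀ i ∈ lastIdx R (t - 1), nextReq σ T i ≤ nextReq σ T j}.ncard ≤ misses A :=
  stmt18_general k T σ R A

end Caching
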